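/- arXiv:2103.09342 — 6 statements merged into one kernel-verified Lean document; each statement's English description precedes it below -/
import Mathlib

section
/- Let F be a field and let A be an invertible (n+1)×(n+1) matrix over F with rows r_0,…,r_n. Define the two-row graph G(A) to be the simple graph on vertex set {0,…,n} where i and j are adjacent if and only if there exists an index k with 0 ≤ k ≤ n−1 such that the 2×2 matrix with rows (a_{i,k}, a_{i,k+1}) and (a_{j,k}, a_{j,k+1}) is invertible. Then G(A) is connected. -/
/-!
Suppose the rows split into two nonempty classes `R` and `Rᶜ` with no edge between them, i.e. every
consecutive `2 × 2` minor taken from one row of `R` and one row of `Rᶜ` vanishes. In each window of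
columns `k, k + 1`, if both classes had a nonzero row, all rows would be proportional there, so the
two columns would be dependent. Hence each window is zero on one of the classes, and since no column
of an invertible matrix is zero, "column `c` vanishes on `R`" propagates from `c = 0` to every `c`.
Window `0` vanishes on `R` or on `Rᶜ`, so some row vanishes entirely, contradicting `det A ≠ 0`.
-/

/-- The two-row graph of a matrix `A`: rows `i` and `j` are adjacent iff some `2 × 2`
submatrix of `A` formed from rows `i, j` and consecutive columns `k, k+1` is invertible. -/
def twoRowGraph {F : Type*} [Field F] {n : ℕ}
    (A : Matrix (Fin (n + 1)) (Fin (n + 1)) F) : SimpleGraph (Fin (n + 1)) :=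
  SimpleGraph.fromRel (fun i j => ∃ k : Fin n,
    A i k.castSucc * A j k.succ - A i k.succ * A j k.castSucc ≠ 0)

open Matrix

lemma mul_sub_mul_eq_zero_of_ne_zero {F : Type*} [Field F] {a b c d e f : F}
    (hab : a ≠ 0 ∨ b ≠ 0) (h₁ : a * d - b * c = 0) (h₂ : a * f - b * e = 0) :
    c * f - d * e = 0 := by
  rcases hab with ha | hb
  · exact mul_left_cancel₀ ha (by linear_combination c * h₂ - e * h₁)
  · exact mul_left_cancel₀ hb (by linear_combination d * h₂ - f * h₁)

lemma Matrix.det_eq_zero_of_smul_col_add_smul_col {F ι : Type*} [Field F] [Fintype ι]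
    [DecidableEq ι] {A : Matrix ι ι F} {a b : ι} (hab : a ≠ b) {x y : F} (hxy : x ≠ 0 ∨ y ≠ 0)
    (h : ∀ r, x * A r a + y * A r b = 0) : A.det = 0 := by
  rw [← exists_mulVec_eq_zero_iff]
  refine ⟨Pi.single a x + Pi.single b y, fun h0 => ?_, ?_⟩
  · rcases hxy with hx | hy
    · exact hx (by simpa [Pi.single_eq_of_ne hab] using congrFun h0 a)
    · exact hy (by simpa [Pi.single_eq_of_ne hab.symm] using congrFun h0 b)
  · ext r
    simpa [mulVec_add, mulVec_single, mul_comm] using h r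

namespace TwoRowGraph

variable {F : Type*} [Field F] {n : ℕ} {A : Matrix (Fin (n + 1)) (Fin (n + 1)) F}

lemma minor_eq_zero_of_not_adj {s t : Fin (n + 1)} (hst : s ≠ t)
    (h : ¬(twoRowGraph A).Adj s t) (k : Fin n) :
    A s k.castSucc * A t k.succ - A s k.succ * A t k.castSucc = 0 := by
  by_contra hk
  exact h ((SimpleGraph.fromRel_adj _ _ _).2 ⟨hst, .inl ⟨k, hk⟩⟩)

def ColZeroOn (A : Matrix (Fin (n + 1)) (Fin (n + 1)) F) (R : Set (Fin (n + 1)))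
    (c : Fin (n + 1)) : Prop :=
  ∀ r ∈ R, A r c = 0

variable {R : Set (Fin (n + 1))}

lemma not_colZeroOn_and_compl (hA : A.det ≠ 0) (c : Fin (n + 1)) :
    ¬(ColZeroOn A R c ∧ ColZeroOn A Rᶜ c) := fun ⟨hR, hRc⟩ =>
  hA <| det_eq_zero_of_column_eq_zero c fun r => (em (r ∈ R)).elim (hR r) (hRc r)

lemma colZeroOn_window (hA : A.det ≠ 0) (hR : ∀ s ∈ R, ∀ t ∉ R, ¬(twoRowGraph A).Adj s t)
    (k : Fin n) :
    (ColZeroOn A R k.castSucc ∧ ColZeroOn A R k.succ) ∨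
      (ColZeroOn A Rᶜ k.castSucc ∧ ColZeroOn A Rᶜ k.succ) := by
  by_contra h
  obtain ⟨s, hs, hs0⟩ : ∃ s ∈ R, A s k.castSucc ≠ 0 ∨ A s k.succ ≠ 0 := by
    by_contra! h'
    exact h (.inl ⟨fun r hr => (h' r hr).1, fun r hr => (h' r hr).2⟩)
  obtain ⟨t, ht, ht0⟩ : ∃ t ∉ R, A t k.castSucc ≠ 0 ∨ A t k.succ ≠ 0 := by
    by_contra! h'
    exact h (.inr ⟨fun r hr => (h' r hr).1, fun r hr => (h' r hr).2⟩)
  have hcross : ∀ s ∈ R, ∀ t ∉ R,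
      A s k.castSucc * A t k.succ - A s k.succ * A t k.castSucc = 0 := fun s hs t ht =>
    minor_eq_zero_of_not_adj (ne_of_mem_of_not_mem hs ht) (hR s hs t ht) k
  -- Row `s` is nonzero in the window, so every row there is proportional to it, hence to row `t`.
  have hprop : ∀ r, A r k.castSucc * A t k.succ - A r k.succ * A t k.castSucc = 0 := by
    intro r
    by_cases hr : r ∈ R
    · exact hcross r hr t ht
    · exact mul_sub_mul_eq_zero_of_ne_zero hs0 (hcross s hs r hr) (hcross s hs t ht)
  exact hA <| det_eq_zero_of_smul_col_add_smul_col k.castSucc_lt_succ.ne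
      (x := A t k.succ) (y := -A t k.castSucc)
    (ht0.symm.imp_right neg_ne_zero.mpr) fun r => by linear_combination hprop r

lemma colZeroOn_succ (hA : A.det ≠ 0) (hR : ∀ s ∈ R, ∀ t ∉ R, ¬(twoRowGraph A).Adj s t)
    {k : Fin n} (h : ColZeroOn A R k.castSucc) : ColZeroOn A R k.succ :=
  (colZeroOn_window hA hR k).elim And.right fun hc =>
    (not_colZeroOn_and_compl hA _ ⟨h, hc.1⟩).elim

lemma colZeroOn_of_colZeroOn_zero (hA : A.det ≠ 0)
    (hR : ∀ s ∈ R, ∀ t ∉ R, ¬(twoRowGraph A).Adj s t) (h₀ : ColZeroOn A R 0)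
    (c : Fin (n + 1)) : ColZeroOn A R c := by
  induction c using Fin.induction with
  | zero => exact h₀
  | succ k ih => exact colZeroOn_succ hA hR ih

lemma not_colZeroOn_zero (hA : A.det ≠ 0) (hR : ∀ s ∈ R, ∀ t ∉ R, ¬(twoRowGraph A).Adj s t)
    {r : Fin (n + 1)} (hr : r ∈ R) : ¬ColZeroOn A R 0 := fun h₀ =>
  hA <| det_eq_zero_of_row_eq_zero r fun c => colZeroOn_of_colZeroOn_zero hA hR h₀ c r hr

theorem det_eq_zero_of_forall_not_adj {s t : Fin (n + 1)} (hs : s ∈ R) (ht : t ∉ R)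
    (hR : ∀ s ∈ R, ∀ t ∉ R, ¬(twoRowGraph A).Adj s t) : A.det = 0 := by
  by_contra hA
  have hRc : ∀ s ∈ Rᶜ, ∀ t ∉ Rᶜ, ¬(twoRowGraph A).Adj s t := fun s hs t ht hst =>
    hR t (not_not.mp ht) s hs hst.symm
  cases n with
  | zero => exact ht (Subsingleton.elim (α := Fin 1) s t ▸ hs)
  | succ m =>
    rcases colZeroOn_window hA hR 0 with h | h
    · exact not_colZeroOn_zero hA hR hs h.1
    · exact not_colZeroOn_zero hA hRc ht h.1

end TwoRowGraph

theorem twoRowGraph_connected_general {F : Type*} [Field F] {n : ℕ}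
    (A : Matrix (Fin (n + 1)) (Fin (n + 1)) F) (hA : IsUnit A.det) :
    (twoRowGraph A).Connected := by
  refine (SimpleGraph.connected_iff_exists_forall_reachable _).2 ⟨0, fun j => ?_⟩
  by_contra hj
  refine hA.ne_zero (TwoRowGraph.det_eq_zero_of_forall_not_adj
    (R := {v | (twoRowGraph A).Reachable 0 v}) .rfl hj ?_)
  exact fun s hs t ht hst => ht (hs.trans hst.reachable)

/-- If `A` is an invertible `(n+1) × (n+1)` matrix over a field, `n ≥ 1`, then its
two-row graph is connected. -/
theorem twoRowGraph_connected {F : Type*} [Field F] {n : ℕ} (hn : 1 ≤ n)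
    (A : Matrix (Fin (n + 1)) (Fin (n + 1)) F) (hA : IsUnit A.det) :
    (twoRowGraph A).Connected :=
  twoRowGraph_connected_general A hA
end

section
/- Let Γ be a finite simple graph with vertex set {x_1,…,x_n}, F a field, and q the edge-pairing on V = F^n as above (q(x_i^*, x_j^*) = ±e^* if {x_i,x_j} is an edge e, and 0 otherwise). For a nonempty subset B of the vertices, let Z ⊆ V be the span of {x^* : x ∈ B}, and let C = {v ∈ V : q(v,z) = 0 for all z ∈ Z}. Then (dim V − dim Z − dim C + dim(C ∩ Z)) / dim Z = |∂B| / |B|, where ∂B is the set of vertices outside B adjacent to some vertex of B. -/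
open Module

section Aux

variable {F : Type*} [Field F] {n : ℕ}

/-- The submodule of functions vanishing outside `S`. -/
def vanishingOn (F : Type*) [Field F] {n : ℕ} (S : Finset (Fin n)) :
    Submodule F (Fin n → F) where
  carrier := {v | ∀ i ∉ S, v i = 0}
  add_mem' := by intro a b ha hb i hi; simp [ha i hi, hb i hi]
  zero_mem' := by intro i hi; rfl
  smul_mem' := by intro c a ha i hi; simp [ha i hi]

lemma mem_vanishingOn {S : Finset (Fin n)} {v : Fin n → F} :
    v ∈ vanishingOn F S ↔ ∀ i ∉ S, v i = 0 := Iff.rfl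

lemma vanishingOn_inf (S T : Finset (Fin n)) :
    vanishingOn F S ⊓ vanishingOn F T = vanishingOn F (S ∩ T) := by
  ext v
  simp only [Submodule.mem_inf, mem_vanishingOn, Finset.mem_inter]
  constructor
  · rintro ⟨h1, h2⟩ i hi
    by_cases hS : i ∈ S
    · exact h2 i (fun hT => hi ⟨hS, hT⟩)
    · exact h1 i hS
  · intro h
    exact ⟨fun i hi => h i (fun hh => hi hh.1), fun i hi => h i (fun hh => hi hh.2)⟩

lemma finrank_vanishingOn (S : Finset (Fin n)) :
    finrank F (vanishingOn F S) = S.card := by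
  let e : vanishingOn F S →ₗ[F] ({x // x ∈ S} → F) :=
    (LinearMap.funLeft F F (Subtype.val : {x // x ∈ S} → Fin n)).comp
      (vanishingOn F S).subtype
  have hbij : Function.Bijective e := by
    constructor
    · intro v w h
      ext i
      by_cases hi : i ∈ S
      · exact congrFun h ⟨i, hi⟩
      · rw [v.2 i hi, w.2 i hi]
    · intro g
      refine ⟨⟨fun i => if h : i ∈ S then g ⟨i, h⟩ else 0, ?_⟩, ?_⟩
      · intro i hi; simp [hi]
      · ext i
        simp only [e, LinearMap.comp_apply, Submodule.subtype_apply,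
          LinearMap.funLeft_apply]
        have : (i : Fin n) ∈ S := i.2
        simp [this]
  rw [LinearEquiv.finrank_eq (LinearEquiv.ofBijective e hbij), Module.finrank_pi]
  exact Fintype.card_coe S

lemma eq_sum_single_of_vanishingOn {S : Finset (Fin n)} {v : Fin n → F}
    (hv : ∀ i ∉ S, v i = 0) :
    v = ∑ i ∈ S, v i • (Pi.single i (1 : F) : Fin n → F) := by
  funext j
  rw [Finset.sum_apply]
  by_cases hj : j ∈ S
  · rw [Finset.sum_eq_single j]
    · simp
    · intro i _ hij
      simp [Pi.single_apply, Ne.symm hij]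
    · intro h; exact absurd hj h
  · rw [hv j hj]
    refine (Finset.sum_eq_zero ?_).symm
    intro i hi
    have : j ≠ i := fun h => hj (h ▸ hi)
    simp [Pi.single_apply, this]

lemma span_singles (S : Finset (Fin n)) :
    Submodule.span F ((fun x => Pi.single x (1 : F)) '' (S : Set (Fin n)))
      = vanishingOn F S := by
  apply le_antisymm
  · rw [Submodule.span_le]
    rintro _ ⟨x, hx, rfl⟩ i hi
    have : i ≠ x := by rintro rfl; exact hi hx
    simp [Pi.single_apply, this]
  · intro v hv
    rw [eq_sum_single_of_vanishingOn hv]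
    exact Submodule.sum_mem _ fun i hi =>
      Submodule.smul_mem _ _ (Submodule.subset_span ⟨i, hi, rfl⟩)

end Aux

section Key

variable {F W : Type*} [Field F] [AddCommGroup W] [Module F W] {n : ℕ}
  (Γ : SimpleGraph (Fin n)) [DecidableRel Γ.Adj]
  (q : (Fin n → F) →ₗ[F] (Fin n → F) →ₗ[F] W)

lemma q_single_eq_zero_iff
    (ε : Γ.edgeSet → W) (hε : LinearIndependent F ε)
    (hadj : ∀ i j : Fin n, ∀ h : Γ.Adj i j,
      q (Pi.single i 1) (Pi.single j 1) = ε ⟨s(i, j), Γ.mem_edgeSet.mpr h⟩ ∨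
      q (Pi.single i 1) (Pi.single j 1) = -ε ⟨s(i, j), Γ.mem_edgeSet.mpr h⟩)
    (hnadj : ∀ i j : Fin n, ¬ Γ.Adj i j → q (Pi.single i 1) (Pi.single j 1) = 0)
    (v : Fin n → F) (b : Fin n) :
    q v (Pi.single b 1) = 0 ↔ ∀ i, Γ.Adj i b → v i = 0 := by
  classical
  set s : Finset (Fin n) := Finset.univ.filter (fun i => Γ.Adj i b) with hs
  have hmem : ∀ i, i ∈ s ↔ Γ.Adj i b := by
    intro i; simp [hs]
  have hq : q v (Pi.single b 1)
      = ∑ i ∈ s, v i • q (Pi.single i 1) (Pi.single b 1) := by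
    conv_lhs => rw [eq_sum_single_of_vanishingOn (S := Finset.univ)
      (v := v) (by simp)]
    rw [map_sum, LinearMap.sum_apply]
    rw [← Finset.sum_filter_add_sum_filter_not Finset.univ (fun i => Γ.Adj i b)]
    have h2 : ∑ i ∈ Finset.univ.filter (fun i => ¬ Γ.Adj i b),
        (q (v i • (Pi.single i 1 : Fin n → F))) (Pi.single b (1:F)) = 0 := by
      refine Finset.sum_eq_zero fun i hi => ?_
      rw [Finset.mem_filter] at hi
      rw [map_smul, LinearMap.smul_apply, hnadj i b hi.2, smul_zero]
    rw [h2, add_zero]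
    refine Finset.sum_congr rfl fun i _ => ?_
    rw [map_smul, LinearMap.smul_apply]
  constructor
  · intro h0 i hi
    -- linear independence argument
    set e : {x // x ∈ s} → Γ.edgeSet := fun x =>
      ⟨s(x.1, b), Γ.mem_edgeSet.mpr ((hmem x.1).mp x.2)⟩ with he
    have einj : Function.Injective e := by
      rintro ⟨x, hx⟩ ⟨y, hy⟩ hxy
      have hne : x ≠ b := ((hmem x).mp hx).ne
      have := Subtype.mk_eq_mk.mp hxy
      rw [Sym2.eq_iff] at this
      rcases this with ⟨h1, _⟩ | ⟨h1, h2⟩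
      · exact Subtype.ext h1
      · exact absurd h1 hne
    set σ : {x // x ∈ s} → Fˣ := fun x =>
      if q (Pi.single x.1 1) (Pi.single b 1) = ε (e x) then 1 else -1 with hσ
    have hfam : (fun x : {x // x ∈ s} =>
        q (Pi.single x.1 1) (Pi.single b (1:F))) = σ • (ε ∘ e) := by
      funext x
      rcases hadj x.1 b ((hmem x.1).mp x.2) with h | h
      · have : σ x = 1 := by rw [hσ]; simp [h, e]
        simp [this, Pi.smul_apply', h, e]
      · by_cases hc : q (Pi.single x.1 1) (Pi.single b (1:F)) = ε (e x)
        · have : σ x = 1 := by rw [hσ]; simp [hc]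
          simp [this, Pi.smul_apply', hc]
        · have hσx : σ x = -1 := by rw [hσ]; simp [hc]
          rw [Pi.smul_apply', hσx]
          simp only [Function.comp_apply]
          rw [h]
          simp [e]
    have hLI : LinearIndependent F (fun x : {x // x ∈ s} =>
        q (Pi.single x.1 1) (Pi.single b (1:F))) := by
      rw [hfam]
      exact (hε.comp e einj).units_smul σ
    have hsum : ∑ x : {x // x ∈ s},
        v x.1 • q (Pi.single x.1 1) (Pi.single b (1:F)) = 0 := by
      rw [Finset.sum_coe_sort s
        (fun i => v i • q (Pi.single i 1) (Pi.single b (1:F))), ← hq, h0]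
    have := Fintype.linearIndependent_iff.mp hLI (fun x => v x.1) hsum
    exact this ⟨i, (hmem i).mpr hi⟩
  · intro h
    rw [hq]
    refine Finset.sum_eq_zero fun i hi => ?_
    rw [h i ((hmem i).mp hi), zero_smul]

end Key

/-- For the edge-pairing `q` modelling the cup product of `A(Γ)`, the linear-algebraic
isoperimetric constant of the span `Z` of the duals of a nonempty set `B` of vertices,
namely `(dim V − dim Z − dim C + dim (C ∩ Z)) / dim Z` where `C` is the `q`-orthogonal
complement of `Z`, equals the combinatorial isoperimetric constant `|∂B| / |B|`. -/
theorem isoperimetric_constant_eq {F W : Type*} [Field F]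
    [AddCommGroup W] [Module F W] {n : ℕ} (Γ : SimpleGraph (Fin n))
    [DecidableRel Γ.Adj]
    (q : (Fin n → F) →ₗ[F] (Fin n → F) →ₗ[F] W)
    (ε : Γ.edgeSet → W) (hε : LinearIndependent F ε)
    (hadj : ∀ i j : Fin n, ∀ h : Γ.Adj i j,
      q (Pi.single i 1) (Pi.single j 1) = ε ⟨s(i, j), Γ.mem_edgeSet.mpr h⟩ ∨
      q (Pi.single i 1) (Pi.single j 1) = -ε ⟨s(i, j), Γ.mem_edgeSet.mpr h⟩)
    (hnadj : ∀ i j : Fin n, ¬ Γ.Adj i j → q (Pi.single i 1) (Pi.single j 1) = 0)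
    (B : Finset (Fin n)) (hB : B.Nonempty) :
    let Z : Submodule F (Fin n → F) :=
      Submodule.span F ((fun x => Pi.single x (1 : F)) '' (B : Set (Fin n)))
    let C : Submodule F (Fin n → F) := ⨅ z ∈ Z, LinearMap.ker (q.flip z)
    let boundary : Finset (Fin n) :=
      Finset.univ.filter (fun v => v ∉ B ∧ ∃ b ∈ B, Γ.Adj v b)
    ((finrank F (Fin n → F) : ℚ) - finrank F Z - finrank F C + finrank F ↥(C ⊓ Z))
        / (finrank F Z : ℚ)
      = (boundary.card : ℚ) / (B.card : ℚ) := by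
  classical
  intro Z C boundary
  set NB : Finset (Fin n) := Finset.univ.filter (fun i => ∃ b ∈ B, Γ.Adj i b) with hNB
  have hmemNB : ∀ i, i ∈ NB ↔ ∃ b ∈ B, Γ.Adj i b := by intro i; simp [hNB]
  have hmemC : ∀ v, v ∈ C ↔ ∀ z ∈ Z, q v z = 0 := by
    intro v
    simp only [C, Submodule.mem_iInf, LinearMap.mem_ker, LinearMap.flip_apply]
  have hZ : Z = vanishingOn F B := span_singles B
  have hC : C = vanishingOn F NBᶜ := by
    ext v
    rw [hmemC, mem_vanishingOn]
    constructor
    · intro hv i hi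
      rw [Finset.mem_compl, not_not] at hi
      obtain ⟨b, hb, hadjb⟩ := (hmemNB i).mp hi
      have hzb : Pi.single b (1:F) ∈ Z :=
        Submodule.subset_span ⟨b, hb, rfl⟩
      have := hv _ hzb
      exact (q_single_eq_zero_iff Γ q ε hε hadj hnadj v b).mp this i hadjb
    · intro hv z hz
      have hle : Z ≤ LinearMap.ker (q v) := by
        rw [Submodule.span_le]
        rintro _ ⟨x, hx, rfl⟩
        rw [SetLike.mem_coe, LinearMap.mem_ker]
        rw [q_single_eq_zero_iff Γ q ε hε hadj hnadj v x]
        intro i hi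
        refine hv i ?_
        rw [Finset.mem_compl, not_not, hmemNB]
        exact ⟨x, hx, hi⟩
      exact hle hz
  have hCZ : C ⊓ Z = vanishingOn F (NBᶜ ∩ B) := by
    rw [hC, hZ, vanishingOn_inf]
  have hb1 : finrank F Z = B.card := by rw [hZ, finrank_vanishingOn]
  have hb2 : finrank F C = NBᶜ.card := by rw [hC, finrank_vanishingOn]
  have hb3 : finrank F ↥(C ⊓ Z) = (NBᶜ ∩ B).card := by
    rw [hCZ, finrank_vanishingOn]
  have hbd : boundary = NB \ B := by
    ext i
    simp only [boundary, Finset.mem_filter, Finset.mem_univ, true_and,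
      Finset.mem_sdiff, hmemNB]
    tauto
  have hV : finrank F (Fin n → F) = n := by
    rw [Module.finrank_pi]; simp
  rw [hb1, hb2, hb3, hbd, hV]
  have hBcard : (0:ℚ) < B.card := by
    exact_mod_cast Finset.card_pos.mpr hB
  rw [div_eq_div_iff hBcard.ne' hBcard.ne']
  have hcompl : (NBᶜ.card : ℚ) = n - NB.card := by
    rw [Finset.card_compl, Fintype.card_fin]
    have : NB.card ≤ n := by
      simpa using Finset.card_le_univ NB
    push_cast [this]
    ring
  have h1 : ((NBᶜ ∩ B).card : ℚ) + ((NB ∩ B).card : ℚ) = B.card := by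
    have : NBᶜ ∩ B = B \ NB := by ext i; simp [Finset.mem_sdiff, and_comm]
    rw [this]
    have := Finset.sdiff_union_inter B NB
    have hd : Disjoint (B \ NB) (B ∩ NB) := Finset.sdiff_disjoint.mono_right
      Finset.inter_subset_right
    have hcard : (B \ NB).card + (B ∩ NB).card = B.card := by
      rw [← Finset.card_union_of_disjoint hd, this]
    rw [Finset.inter_comm NB B] at *
    exact_mod_cast hcard
  have h2 : ((NB \ B).card : ℚ) + ((NB ∩ B).card : ℚ) = NB.card := by
    have hd : Disjoint (NB \ B) (NB ∩ B) := Finset.sdiff_disjoint.mono_right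
      Finset.inter_subset_right
    have hcard : (NB \ B).card + (NB ∩ B).card = NB.card := by
      rw [← Finset.card_union_of_disjoint hd, Finset.sdiff_union_inter]
    exact_mod_cast hcard
  rw [hcompl]
  nlinarith [h1, h2]
end

section
/- Let Γ be a finite simple graph with a k-coloring, i.e., a partition of its vertices into k independent sets of sizes n_1,…,n_k (so n_1 + ⋯ + n_k = |V(Γ)|). Then there is a surjective group homomorphism from the right-angled Artin group A(Γ) onto the direct product F_{n_1} × ⋯ × F_{n_k} of free groups of ranks n_1,…,n_k. -/
/-!
Send each vertex `v` to the generator `v` of the free factor indexed by its color. Adjacent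
vertices have distinct colors, so their images lie in different factors and commute; hence the
map respects the RAAG relators. Each factor is hit by the generators of its color class, and a
finite product of groups is generated by its factors, so the induced homomorphism is surjective.
-/

/-- The defining relators of a right-angled Artin group: one commutator per edge. -/
def raagRels {V : Type} (Γ : SimpleGraph V) : Set (FreeGroup V) :=
  {r | ∃ v w : V, Γ.Adj v w ∧
    r = FreeGroup.of v * FreeGroup.of w * (FreeGroup.of v)⁻¹ * (FreeGroup.of w)⁻¹}

/-- The right-angled Artin group on the graph `Γ`. -/
abbrev RAAG {V : Type} (Γ : SimpleGraph V) : Type := PresentedGroup (raagRels Γ)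

namespace RAAG

variable {V : Type} {Γ : SimpleGraph V}

section Lift

variable {G : Type*} [Group G] (f : V → G) (hf : ∀ v w, Γ.Adj v w → Commute (f v) (f w))

def lift : RAAG Γ →* G :=
  PresentedGroup.toGroup (f := f) <| by
    rintro _ ⟨v, w, hvw, rfl⟩
    simpa [commutatorElement_def] using commutatorElement_eq_one_iff_commute.mpr (hf v w hvw)

@[simp]
theorem lift_of (v : V) : lift f hf (PresentedGroup.of v) = f v :=
  PresentedGroup.toGroup.of _

end Lift

variable {ι : Type*} [DecidableEq ι] (C : Γ.Coloring ι)

def toColorClassGenerator (v : V) : (i : ι) → FreeGroup {w : V // C w = i} :=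
  Pi.mulSingle (C v) (FreeGroup.of ⟨v, rfl⟩)

def toFreeColorClasses : RAAG Γ →* ((i : ι) → FreeGroup {v : V // C v = i}) :=
  lift (toColorClassGenerator C) fun _ _ hvw => Pi.mulSingle_commute (C.valid hvw) _ _

@[simp]
theorem toFreeColorClasses_of (v : V) :
    toFreeColorClasses C (PresentedGroup.of v) = toColorClassGenerator C v :=
  lift_of _ _ v

theorem toFreeColorClasses_comp_mk_map_val (i : ι) :
    (toFreeColorClasses C).comp
        ((PresentedGroup.mk _).comp (FreeGroup.map (Subtype.val : {v : V // C v = i} → V))) =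
      MonoidHom.mulSingle (fun j => FreeGroup {v : V // C v = j}) i := by
  refine FreeGroup.ext_hom _ _ fun v => ?_
  obtain ⟨v, rfl⟩ := v
  exact toFreeColorClasses_of C v

theorem toFreeColorClasses_surjective [Finite ι] :
    Function.Surjective (toFreeColorClasses C) := by
  intro x
  refine MonoidHom.mem_range.mp (Subgroup.pi_mem_of_mulSingle_mem x fun i => ?_)
  rw [← MonoidHom.mulSingle_apply, ← toFreeColorClasses_comp_mk_map_val]
  exact ⟨_, (MonoidHom.comp_apply _ _ _).symm⟩

end RAAG

theorem raag_surjects_onto_product_of_free_groups_of_coloring_general {V : Type}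
    (Γ : SimpleGraph V) (k : ℕ) (κ : V → Fin k)
    (hκ : ∀ v w : V, Γ.Adj v w → κ v ≠ κ w) :
    ∃ f : RAAG Γ →* ((i : Fin k) → FreeGroup {v : V // κ v = i}),
      Function.Surjective f :=
  let C : Γ.Coloring (Fin k) := SimpleGraph.Coloring.mk κ (hκ _ _)
  ⟨RAAG.toFreeColorClasses C, RAAG.toFreeColorClasses_surjective C⟩

/-- If a finite simple graph `Γ` admits a proper `k`-coloring `κ`, then `A(Γ)` surjects
onto the direct product of the free groups on the `k` color classes (free groups of ranks
`n₁, …, n_k` with `n₁ + ⋯ + n_k = |V(Γ)|`). -/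
theorem raag_surjects_onto_product_of_free_groups_of_coloring {V : Type} [Fintype V]
    (Γ : SimpleGraph V) (k : ℕ) (κ : V → Fin k)
    (hκ : ∀ v w : V, Γ.Adj v w → κ v ≠ κ w) :
    ∃ f : RAAG Γ →* ((i : Fin k) → FreeGroup {v : V // κ v = i}),
      Function.Surjective f :=
  raag_surjects_onto_product_of_free_groups_of_coloring_general Γ k κ hκ
end

section
/- Let A be an invertible N×N matrix over a field, whose columns are partitioned into consecutive blocks A = (A_1 | A_2 | ⋯ | A_k) with A_i of size N × n_i and n_1 + ⋯ + n_k = N. Then there exists a permutation of the rows of A after which, writing the row indices as consecutive blocks of sizes n_1,…,n_k, the diagonal square blocks C_i (the n_i × n_i submatrix of A_i on the i-th row block) are all invertible. -/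
/-!
Color the columns by their block. Expanding `det A` multilinearly in the rows, splitting each row
into its parts supported on the column blocks, writes `det A` as a sum over row colorings `f` of
the determinants of the masks keeping only the entries whose row and column colors agree. Some
term is nonzero; for it, the rows of color `b` are linearly independent and supported on the
`n_b` columns of color `b`, so each color occurs at most, hence exactly, `n_b` times among the
rows. Permuting the rows so that `f` becomes the block coloring turns that mask into a
block-diagonal matrix with nonzero determinant, whose diagonal blocks are those of the permuted `A`.
-/

open Finset

theorem LinearIndependent.card_le_card_of_forall_apply_eq_zero {R ι m : Type*} [Ring R]
    [StrongRankCondition R] [Fintype ι] {v : ι → m → R} (hv : LinearIndependent R v)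
    (q : m → Prop) [Fintype {y // q y}] (hq : ∀ i y, ¬q y → v i y = 0) :
    Fintype.card ι ≤ Fintype.card {y // q y} := by
  have hrestrict : LinearIndependent R fun i (y : {y // q y}) => v i y := by
    rw [Fintype.linearIndependent_iff]
    intro c hc
    refine Fintype.linearIndependent_iff.1 hv c (funext fun y => ?_)
    by_cases hy : q y
    · simpa using congrFun hc ⟨y, hy⟩
    · simp [hq _ _ hy]
  simpa using hrestrict.fintype_card_le_finrank

theorem Fintype.exists_perm_comp_eq_of_card_fiber_le {α β : Type*} [Fintype α] [Fintype β]
    [DecidableEq β] {f g : α → β}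
    (h : ∀ b, Fintype.card {a // f a = b} ≤ Fintype.card {a // g a = b}) :
    ∃ σ : Equiv.Perm α, f ∘ σ = g := by
  have hsum (f : α → β) : ∑ b, Fintype.card {a // f a = b} = Fintype.card α := by
    rw [← Fintype.card_sigma, Fintype.card_congr (Equiv.sigmaFiberEquiv f)]
  have hcard : ∀ b, Fintype.card {a // g a = b} = Fintype.card {a // f a = b} := fun b =>
    ((sum_eq_sum_iff_of_le fun b _ => h b).1 (by rw [hsum, hsum]) b (mem_univ b)).symm
  exact ⟨Equiv.ofFiberEquiv fun b => Fintype.equivOfCardEq (hcard b),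
    funext (Equiv.ofFiberEquiv_map _)⟩

namespace Matrix

variable {l m n o β R : Type*}

def colorMask [Zero R] [DecidableEq β] (A : Matrix m n R) (f : m → β) (p : n → β) :
    Matrix m n R :=
  of fun x y => if f x = p y then A x y else 0

theorem colorMask_submatrix [Zero R] [DecidableEq β] (A : Matrix m n R) (f : m → β)
    (p : n → β) (σ : l → m) (τ : o → n) :
    (A.colorMask f p).submatrix σ τ = (A.submatrix σ τ).colorMask (f ∘ σ) (p ∘ τ) :=
  rfl

theorem toSquareBlock_colorMask_self [Zero R] [DecidableEq β] (M : Matrix m m R) (p : m → β)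
    (b : β) : (M.colorMask p p).toSquareBlock p b = M.toSquareBlock p b := by
  ext x y
  simp [toSquareBlock_def, colorMask, x.2, y.2]

theorem det_colorMask_self [CommRing R] [Fintype m] [DecidableEq m] [Fintype β] [DecidableEq β]
    (M : Matrix m m R) (p : m → β) :
    (M.colorMask p p).det = ∏ b, (M.toSquareBlock p b).det := by
  -- the mask is block diagonal, hence block triangular for any linear order on the colors
  let _ : LinearOrder β := LinearOrder.lift' (Fintype.equivFin β) (Equiv.injective _)
  have hM : (M.colorMask p p).BlockTriangular p := fun _ _ hxy => if_neg hxy.ne'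
  simp_rw [hM.det_fintype, toSquareBlock_colorMask_self]

theorem det_eq_sum_det_colorMask [CommRing R] [Fintype m] [DecidableEq m] [Fintype β]
    [DecidableEq β] (A : Matrix m m R) (p : m → β) :
    A.det = ∑ f : m → β, (A.colorMask f p).det := by
  have hrows : A = fun x => ∑ b, fun y => if b = p y then A x y else 0 := by
    ext x y
    simp [Finset.sum_apply]
  conv_lhs => rw [hrows]
  exact (detRowAlternating : (m → R) [⋀^m]→ₗ[R] R).toMultilinearMap.map_sum _

theorem card_fiber_le_of_det_colorMask_ne_zero {K : Type*} [Field K] [Fintype m] [DecidableEq m]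
    [DecidableEq β] {A : Matrix m m K} {f p : m → β} (h : (A.colorMask f p).det ≠ 0) (b : β) :
    Fintype.card {x // f x = b} ≤ Fintype.card {y // p y = b} := by
  have hrows := linearIndependent_rows_of_isUnit ((isUnit_iff_isUnit_det _).2 h.isUnit)
  exact (hrows.comp Subtype.val Subtype.val_injective).card_le_card_of_forall_apply_eq_zero _
    fun x _ hy => if_neg (x.2.trans_ne (Ne.symm hy))

theorem exists_perm_isUnit_det_toSquareBlock {K : Type*} [Field K] [Fintype m] [DecidableEq m]
    [Fintype β] [DecidableEq β] {A : Matrix m m K} (hA : IsUnit A.det) (p : m → β) :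
    ∃ σ : Equiv.Perm m, ∀ b, IsUnit ((A.submatrix σ id).toSquareBlock p b).det := by
  obtain ⟨f, -, hf⟩ :=
    exists_ne_zero_of_sum_ne_zero ((det_eq_sum_det_colorMask A p) ▸ hA.ne_zero)
  obtain ⟨σ, hσ⟩ := Fintype.exists_perm_comp_eq_of_card_fiber_le
    (card_fiber_le_of_det_colorMask_ne_zero hf)
  have hσdet : ((A.colorMask f p).submatrix σ id).det ≠ 0 := by
    rw [det_permute]
    exact mul_ne_zero ((Units.isUnit _).map (Int.castRingHom K)).ne_zero hf
  rw [colorMask_submatrix, hσ, Function.comp_id, det_colorMask_self, prod_ne_zero_iff] at hσdet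
  exact ⟨σ, fun b => (hσdet b (mem_univ b)).isUnit⟩

theorem det_toSquareBlock_sigma_fst [CommRing R] {ι : Type*} {κ : ι → Type*} [Fintype ι]
    [DecidableEq ι] [∀ i, Fintype (κ i)] [∀ i, DecidableEq (κ i)]
    (M : Matrix ((i : ι) × κ i) ((i : ι) × κ i) R) (i : ι) :
    (M.toSquareBlock Sigma.fst i).det = (of fun a b : κ i => M ⟨i, a⟩ ⟨i, b⟩).det := by
  rw [← det_reindex_self (Equiv.sigmaSubtype i)]
  rfl

end Matrix

/-- Let `A` be an invertible `N × N` matrix over a field whose columns are partitioned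
into blocks of sizes `n 0, …, n (k-1)` (with `n 0 + ⋯ + n (k-1) = N`; rows and columns
are indexed by the sigma type `Σ i, Fin (n i)`).  Then the rows of `A` can be permuted so
that for each `i` the diagonal square block, i.e. the `n i × n i` submatrix of the `i`-th
column block lying on the `i`-th row block, is invertible. -/
theorem exists_row_permutation_diagonal_blocks_invertible {F : Type*} [Field F]
    {k : ℕ} (n : Fin k → ℕ)
    (A : Matrix ((i : Fin k) × Fin (n i)) ((i : Fin k) × Fin (n i)) F)
    (hA : IsUnit A.det) :
    ∃ σ : Equiv.Perm ((i : Fin k) × Fin (n i)), ∀ i : Fin k,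
      IsUnit (Matrix.det (Matrix.of fun a b : Fin (n i) => A (σ ⟨i, a⟩) ⟨i, b⟩)) := by
  obtain ⟨σ, hσ⟩ := Matrix.exists_perm_isUnit_det_toSquareBlock hA Sigma.fst
  exact ⟨σ, fun i => Matrix.det_toSquareBlock_sigma_fst (A.submatrix σ id) i ▸ hσ i⟩
end

section
/- Let Γ be a finite simple connected graph with at least two vertices that contains no induced path P_4 on four vertices. Then Γ splits as a nontrivial join: its complement graph is disconnected. -/
/-!
By induction on the number of vertices, a graph `G` on at least two vertices such that both `G`
and `Gᶜ` are connected contains an induced `P₄`. Delete a vertex `v`. If `G - v` and its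
complement are both connected, induction applies. If `G - v` is disconnected, then `v` has a
neighbour in every component of `G - v`. Let `z` be a non-neighbour of `v`. Along a path in the
component of `z`, find adjacent vertices `p ~ q` with `v ~ p` and `v ≁ q`. A neighbour `b` of `v`
in another component then gives the induced path `b - v - p - q`. Since `P₄` is self-complementary,
the case where `Gᶜ - v` is disconnected is the same argument applied to `Gᶜ`.
-/

namespace SimpleGraph

variable {V : Type*} {G : SimpleGraph V}

theorem pathGraph_four_isIndContained {a b c d : V} (hab : G.Adj a b) (hbc : G.Adj b c)
    (hcd : G.Adj c d) (hac : ¬ G.Adj a c) (hbd : ¬ G.Adj b d) (had : ¬ G.Adj a d) :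
    pathGraph 4 ⊴ G := by
  have hac' : a ≠ c := by rintro rfl; exact had hcd
  have hbd' : b ≠ d := by rintro rfl; exact had hab
  have had' : a ≠ d := by rintro rfl; exact hac hcd.symm
  refine ⟨⟨⟨![a, b, c, d], fun i j hij => ?_⟩, fun {i j} => ?_⟩⟩
  · fin_cases i <;> fin_cases j <;>
      simp_all [hab.ne, hbc.ne, hcd.ne, hab.ne.symm, hbc.ne.symm, hcd.ne.symm, hac'.symm,
        hbd'.symm, had'.symm]
  · show G.Adj (![a, b, c, d] i) (![a, b, c, d] j) ↔ _
    have hca : ¬ G.Adj c a := fun h => hac h.symm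
    have hdb : ¬ G.Adj d b := fun h => hbd h.symm
    have hda : ¬ G.Adj d a := fun h => had h.symm
    fin_cases i <;> fin_cases j <;>
      simp [pathGraph_adj, hab, hbc, hcd, hac, hbd, had, hab.symm, hbc.symm, hcd.symm, hca, hdb,
        hda]

theorem pathGraph_four_isIndContained_compl : pathGraph 4 ⊴ (pathGraph 4)ᶜ := by
  apply pathGraph_four_isIndContained (a := 2) (b := 0) (c := 3) (d := 1) <;>
    simp [pathGraph_adj]

theorem pathGraph_four_isIndContained_of_compl (h : pathGraph 4 ⊴ Gᶜ) : pathGraph 4 ⊴ G :=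
  pathGraph_four_isIndContained_compl.trans (by simpa using h.compl)

theorem compl_induce (s : Set V) : (G.induce s)ᶜ = Gᶜ.induce s := by
  ext u w
  simp [Subtype.ext_iff]

theorem Reachable.exists_reachable_adj_mem_notMem {S : Set V} {x y : V} (h : G.Reachable x y)
    (hx : x ∈ S) (hy : y ∉ S) : ∃ a b, G.Reachable x a ∧ G.Adj a b ∧ a ∈ S ∧ b ∉ S := by
  obtain ⟨w⟩ := h
  induction w with
  | nil => exact absurd hx hy
  | @cons x z y hxz _ ih =>
    by_cases hz : z ∈ S
    · obtain ⟨a, b, hza, hab, ha, hb⟩ := ih hz hy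
      exact ⟨a, b, hxz.reachable.trans hza, hab, ha, hb⟩
    · exact ⟨x, z, .rfl, hxz, hx, hz⟩

theorem Connected.exists_reachable_induce_compl_singleton_adj (hG : G.Connected) {v : V}
    (u : ({v}ᶜ : Set V)) : ∃ b : ({v}ᶜ : Set V), (G.induce {v}ᶜ).Reachable u b ∧ G.Adj v b := by
  obtain ⟨-, b, -, hab, ⟨a, hua, rfl⟩, hb⟩ :=
    (hG.preconnected u v).exists_reachable_adj_mem_notMem
      (S := Subtype.val '' {b | (G.induce {v}ᶜ).Reachable u b}) ⟨u, .rfl, rfl⟩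
      (by rintro ⟨w, -, hw⟩; exact w.2 hw)
  have hbv : b = v := by
    by_contra hbv
    exact hb ⟨⟨b, hbv⟩, hua.trans (Adj.reachable (G := G.induce {v}ᶜ) hab), rfl⟩
  exact ⟨a, hua, hbv ▸ hab.symm⟩

theorem Connected.pathGraph_four_isIndContained_of_not_connected_induce_compl_singleton
    (hG : G.Connected) {v z : V} (hvz : Gᶜ.Adj v z) (hH : ¬ (G.induce {v}ᶜ).Connected) :
    pathGraph 4 ⊴ G := by
  set H := G.induce {v}ᶜ
  obtain ⟨p₀, hp₀z, hvp₀⟩ := hG.exists_reachable_induce_compl_singleton_adj ⟨z, hvz.ne.symm⟩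
  obtain ⟨p, q, -, hpq, hvp, hvq⟩ :=
    hp₀z.symm.exists_reachable_adj_mem_notMem (S := {x : ({v}ᶜ : Set V) | G.Adj v x}) hvp₀ hvz.2
  obtain ⟨y, hpy⟩ : ∃ y, ¬ H.Reachable p y := by
    by_contra! h
    exact hH ((connected_iff H).2 ⟨fun x y => (h x).symm.trans (h y), ⟨p⟩⟩)
  obtain ⟨b, hyb, hvb⟩ := hG.exists_reachable_induce_compl_singleton_adj y
  have hpb : ¬ H.Reachable p b := fun h => hpy (h.trans hyb.symm)
  exact pathGraph_four_isIndContained hvb.symm hvp hpq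
    (fun h : H.Adj b p => hpb h.symm.reachable) hvq
    (fun h : H.Adj b q => hpb ((Adj.reachable (G := H) hpq).trans h.symm.reachable))

theorem pathGraph_four_isIndContained_of_connected_of_connected_compl [Finite V] [Nontrivial V]
    (hG : G.Connected) (hGc : Gᶜ.Connected) : pathGraph 4 ⊴ G := by
  induction hn : Nat.card V generalizing V with
  | zero => exact absurd hn Nat.card_pos.ne'
  | succ n ih =>
    obtain ⟨v⟩ := ‹Nontrivial V›.to_nonempty
    obtain ⟨u, hvu⟩ := hG.preconnected.exists_adj_of_nontrivial v
    obtain ⟨w, hvw⟩ := hGc.preconnected.exists_adj_of_nontrivial v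
    have : Nontrivial ({v}ᶜ : Set V) :=
      ⟨⟨u, hvu.ne.symm⟩, ⟨w, hvw.ne.symm⟩, fun h => hvw.2 (Subtype.mk.inj h ▸ hvu)⟩
    have hW : Nat.card ({v}ᶜ : Set V) = n := by
      rw [Nat.card_coe_set_eq, Set.ncard_compl, Set.ncard_singleton, hn, Nat.add_sub_cancel]
    by_cases hH : (G.induce {v}ᶜ).Connected
    · by_cases hHc : (Gᶜ.induce {v}ᶜ).Connected
      · exact (ih hH (compl_induce _ ▸ hHc) hW).trans ⟨Embedding.induce _⟩
      · exact pathGraph_four_isIndContained_of_compl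
          (hGc.pathGraph_four_isIndContained_of_not_connected_induce_compl_singleton
            (by simpa using hvu) hHc)
    · exact hG.pathGraph_four_isIndContained_of_not_connected_induce_compl_singleton hvw hH

end SimpleGraph

/-- A finite simple connected graph with at least two vertices and no induced path `P₄`
on four vertices splits as a nontrivial join: its complement graph is disconnected. -/
theorem cograph_connected_is_join {α : Type} [Fintype α] (Γ : SimpleGraph α)
    (hconn : Γ.Connected) (hcard : 2 ≤ Fintype.card α)
    (hP4 : IsEmpty (SimpleGraph.pathGraph 4 ↪g Γ)) :
    ¬ Γᶜ.Connected := fun hcc =>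
  have : Nontrivial α := Fintype.one_lt_card_iff_nontrivial.mp hcard
  not_nonempty_iff.mpr hP4
    (SimpleGraph.pathGraph_four_isIndContained_of_connected_of_connected_compl hconn hcc)
end

section
/- If G and H are both infinite finitely generated groups, then the direct product G × H has exactly one end. -/
/-- The Cayley graph of a group with respect to a set `S` of generators: `g` is adjacent
to `h` iff `g ≠ h` and `h = g * s` or `g = h * s` for some `s ∈ S`. -/
def cayleyGraph (G : Type*) [Group G] (S : Set G) : SimpleGraph G :=
  SimpleGraph.fromRel (fun g h => ∃ s ∈ S, h = g * s)

open SimpleGraph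

namespace CayleyAux

lemma cayley_adj {G : Type*} [Group G] (S : Set G) {a b : G} :
    (cayleyGraph G S).Adj a b ↔ a ≠ b ∧ ((∃ s ∈ S, b = a * s) ∨ ∃ s ∈ S, a = b * s) :=
  Iff.rfl

/-- Left multiplication as a graph homomorphism of the Cayley graph. -/
def mulHom {G : Type*} [Group G] (S : Set G) (u : G) :
    cayleyGraph G S →g cayleyGraph G S where
  toFun := (u * ·)
  map_rel' := by
    intro a b hab
    rw [cayley_adj] at hab ⊢
    obtain ⟨hne, h⟩ := hab
    refine ⟨by simpa using hne, ?_⟩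
    rcases h with ⟨s, hs, rfl⟩ | ⟨s, hs, heq⟩
    · exact Or.inl ⟨s, hs, (mul_assoc u a s).symm⟩
    · exact Or.inr ⟨s, hs, by rw [heq, mul_assoc]⟩

lemma reachable_mul {G : Type*} [Group G] (S : Set G) (u : G) {a b : G}
    (h : (cayleyGraph G S).Reachable a b) :
    (cayleyGraph G S).Reachable (u * a) (u * b) :=
  h.map (mulHom S u)

lemma reachable_one {G : Type*} [Group G] (S : Set G) (hS : Subgroup.closure S = ⊤) (g : G) :
    (cayleyGraph G S).Reachable 1 g := by
  have hg : g ∈ Subgroup.closure S := hS ▸ Subgroup.mem_top g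
  induction hg using Subgroup.closure_induction with
  | mem s hs =>
    by_cases h1 : (1 : G) = s
    · exact h1 ▸ Reachable.refl 1
    · exact ((cayley_adj S).mpr ⟨h1, Or.inl ⟨s, hs, (one_mul s).symm⟩⟩).reachable
  | one => exact Reachable.refl 1
  | mul x y hx hy ihx ihy =>
    refine ihx.trans ?_
    have := reachable_mul S x ihy
    rwa [mul_one] at this
  | inv x hx ihx =>
    have := reachable_mul S x⁻¹ ihx
    rw [mul_one, inv_mul_cancel] at this
    exact this.symm

lemma preconnected {G : Type*} [Group G] (S : Set G) (hS : Subgroup.closure S = ⊤) :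
    (cayleyGraph G S).Preconnected := fun x y =>
  (reachable_one S hS x).symm.trans (reachable_one S hS y)

lemma neighborSet_finite {G : Type*} [Group G] (S : Finset G) (v : G) :
    ((cayleyGraph G (S : Set G)).neighborSet v).Finite := by
  apply Set.Finite.subset (((S.finite_toSet.image (fun s => v * s)).union
    (S.finite_toSet.image (fun s => v * s⁻¹))))
  intro w hw
  obtain ⟨-, h⟩ := (cayley_adj (S : Set G)).mp hw
  rcases h with ⟨s, hs, rfl⟩ | ⟨s, hs, heq⟩
  · exact Or.inl ⟨s, hs, rfl⟩
  · exact Or.inr ⟨s, hs, by simp [heq]⟩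

lemma mkC_congr {V : Type*} {Γ : SimpleGraph V} {K : Set V} {x y : V} (h : x = y)
    (hx : x ∉ K) (hy : y ∉ K) :
    Γ.componentComplMk hx = Γ.componentComplMk hy := by subst h; rfl

lemma walk_mkC {V : Type*} {Γ : SimpleGraph V} {K : Set V} {x y : V} (p : Γ.Walk x y)
    (hp : ∀ v ∈ p.support, v ∉ K) (hx : x ∉ K) (hy : y ∉ K) :
    Γ.componentComplMk hx = Γ.componentComplMk hy := by
  induction p with
  | nil => rfl
  | @cons a b c h q ih =>
    have hb : b ∉ K := hp b (by rw [Walk.support_cons]; exact List.mem_cons_of_mem _ q.start_mem_support)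
    refine (Γ.componentComplMk_eq_of_adj hx hb h).trans (ih ?_ hb hy)
    intro v hv
    exact hp v (by rw [Walk.support_cons]; exact List.mem_cons_of_mem _ hv)

/-- Main connectivity lemma: there is a finite set `L ⊇ K0` such that any two vertices
outside `L` lie in the same connected component of the complement of `K0`. -/
lemma main_comp {G H : Type*} [Group G] [Group H] [Infinite G] [Infinite H]
    (S : Set (G × H)) (hS : Subgroup.closure S = ⊤)
    (SG : Finset G) (hSG : Subgroup.closure (SG : Set G) = ⊤)
    (SH : Finset H) (hSH : Subgroup.closure (SH : Set H) = ⊤)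
    (K0 : Finset (G × H)) :
    ∃ L : Finset (G × H), K0 ⊆ L ∧ ∀ x y : G × H, x ∉ L → y ∉ L →
      ∀ (hx : x ∉ (K0 : Set (G × H))) (hy : y ∉ (K0 : Set (G × H))),
        (cayleyGraph (G × H) S).componentComplMk hx
          = (cayleyGraph (G × H) S).componentComplMk hy := by
  classical
  set Γ := cayleyGraph (G × H) S with hΓ
  have hpc : Γ.Preconnected := preconnected S hS
  set K : Set (G × H) := (K0 : Set (G × H)) with hK
  -- chosen walks from 1 to each element
  have w : ∀ t : G × H, Γ.Walk 1 t := fun t => (hpc 1 t).some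
  set T : Set (G × H) := ((SG : Set G) ×ˢ ({1} : Set H)) ∪ (({1} : Set G) ×ˢ (SH : Set H)) with hT
  have hTfin : T.Finite :=
    (SG.finite_toSet.prod (Set.finite_singleton 1)).union
      ((Set.finite_singleton 1).prod SH.finite_toSet)
  set F : Set (G × H) := {1} ∪ ⋃ t ∈ T, {v | v ∈ (w t).support} with hF
  have hFfin : F.Finite :=
    (Set.finite_singleton 1).union (hTfin.biUnion fun t _ => (w t).support.finite_toSet)
  set Kbad : Set (G × H) := {u | ∃ f ∈ F, u * f ∈ K} with hKbad
  have hKbadfin : Kbad.Finite := by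
    have hsub : Kbad ⊆ (fun p : (G × H) × (G × H) => p.1 * p.2⁻¹) '' (K ×ˢ F) := by
      rintro u ⟨f, hf, hu⟩
      exact ⟨(u * f, f), ⟨hu, hf⟩, by simp⟩
    exact ((K0.finite_toSet.prod hFfin).image _).subset hsub
  have hKsub : K ⊆ Kbad := fun u hu => ⟨1, Or.inl rfl, by simpa using hu⟩
  have hnotK : ∀ {u : G × H}, u ∉ Kbad → u ∉ K := fun h hK' => h (hKsub hK')
  -- one step along a generator of T
  have stepT : ∀ t ∈ T, ∀ u : G × H, u ∉ Kbad → ∀ (h1 : u ∉ K) (h2 : u * t ∉ K),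
      Γ.componentComplMk h1 = Γ.componentComplMk h2 := by
    intro t ht u hu h1 h2
    have hwt : ∀ v ∈ ((w t).map (mulHom S u)).support, v ∉ K := by
      intro v hv
      rw [Walk.support_map, List.mem_map] at hv
      obtain ⟨f, hf, rfl⟩ := hv
      intro hvK
      exact hu ⟨f, Or.inr (Set.mem_biUnion ht hf), hvK⟩
    have h1' : u * 1 ∉ K := by rwa [mul_one]
    exact (mkC_congr (mul_one u).symm h1 h1').trans
      (walk_mkC ((w t).map (mulHom S u)) hwt h1' h2)
  set A : Set G := Prod.fst '' Kbad with hA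
  set B : Set H := Prod.snd '' Kbad with hB
  have hAfin : A.Finite := hKbadfin.image _
  have hBfin : B.Finite := hKbadfin.image _
  have memB : ∀ {g : G} {h : H}, h ∉ B → (g, h) ∉ Kbad := fun hB' hmem => hB' ⟨_, hmem, rfl⟩
  have memA : ∀ {g : G} {h : H}, g ∉ A → (g, h) ∉ Kbad := fun hA' hmem => hA' ⟨_, hmem, rfl⟩
  -- moving in the G coordinate when the H coordinate avoids B
  have Gmove : ∀ (h : H), h ∉ B → ∀ c g : G, ∀ (hg : (g, h) ∉ K) (hgc : (g * c, h) ∉ K),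
      Γ.componentComplMk hg = Γ.componentComplMk hgc := by
    intro h hBh c g hg hgc
    have hnb : ∀ g' : G, ((g', h) : G × H) ∉ Kbad := fun g' => memB hBh
    have hnk : ∀ g' : G, ((g', h) : G × H) ∉ K := fun g' => hnotK (hnb g')
    have main : ∀ c' ∈ Subgroup.closure (SG : Set G), ∀ g' : G,
        Γ.componentComplMk (hnk g') = Γ.componentComplMk (hnk (g' * c')) := by
      intro c' hc'
      induction hc' using Subgroup.closure_induction with
      | mem s hs =>
        intro g'
        have ht : ((s, (1 : H)) : G × H) ∈ T := Or.inl ⟨hs, rfl⟩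
        have := stepT (s, 1) ht (g', h) (hnb g') (hnk g') (by
          have : ((g', h) : G × H) * (s, 1) = (g' * s, h) := by simp [Prod.ext_iff]
          rw [this]; exact hnk _)
        refine this.trans (mkC_congr (by simp [Prod.ext_iff]) _ _)
      | one => intro g'; exact mkC_congr (by simp) _ _
      | mul x y hx hy ihx ihy =>
        intro g'
        exact (ihx g').trans ((ihy (g' * x)).trans (mkC_congr (by rw [mul_assoc]) _ _))
      | inv x hx ihx =>
        intro g'
        have := ihx (g' * x⁻¹)
        exact (mkC_congr (by rw [inv_mul_cancel_right]) _ _).trans this.symm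
    exact main c (hSG ▸ Subgroup.mem_top c) g
  -- moving in the H coordinate when the G coordinate avoids A
  have Hmove : ∀ (g : G), g ∉ A → ∀ c h : H, ∀ (hg : (g, h) ∉ K) (hgc : (g, h * c) ∉ K),
      Γ.componentComplMk hg = Γ.componentComplMk hgc := by
    intro g hAg c h hg hgc
    have hnb : ∀ h' : H, ((g, h') : G × H) ∉ Kbad := fun h' => memA hAg
    have hnk : ∀ h' : H, ((g, h') : G × H) ∉ K := fun h' => hnotK (hnb h')
    have main : ∀ c' ∈ Subgroup.closure (SH : Set H), ∀ h' : H,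
        Γ.componentComplMk (hnk h') = Γ.componentComplMk (hnk (h' * c')) := by
      intro c' hc'
      induction hc' using Subgroup.closure_induction with
      | mem s hs =>
        intro h'
        have ht : (((1 : G), s) : G × H) ∈ T := Or.inr ⟨rfl, hs⟩
        have := stepT (1, s) ht (g, h') (hnb h') (hnk h') (by
          have : ((g, h') : G × H) * (1, s) = (g, h' * s) := by simp [Prod.ext_iff]
          rw [this]; exact hnk _)
        refine this.trans (mkC_congr (by simp [Prod.ext_iff]) _ _)
      | one => intro h'; exact mkC_congr (by simp) _ _
      | mul x y hx hy ihx ihy =>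
        intro h'
        exact (ihx h').trans ((ihy (h' * x)).trans (mkC_congr (by rw [mul_assoc]) _ _))
      | inv x hx ihx =>
        intro h'
        have := ihx (h' * x⁻¹)
        exact (mkC_congr (by rw [inv_mul_cancel_right]) _ _).trans this.symm
    exact main c (hSH ▸ Subgroup.mem_top c) h
  -- choose generic elements
  obtain ⟨g₀, hg₀⟩ := hAfin.infinite_compl.nonempty
  obtain ⟨h₀, hh₀⟩ := hBfin.infinite_compl.nonempty
  rw [Set.mem_compl_iff] at hg₀ hh₀
  have hz₀ : ((g₀, h₀) : G × H) ∉ K := hnotK (memB hh₀)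
  -- the finite set L
  have hLfin : (Kbad ∪ A ×ˢ B).Finite := hKbadfin.union (hAfin.prod hBfin)
  refine ⟨K0 ∪ hLfin.toFinset, Finset.subset_union_left, ?_⟩
  have connect : ∀ (a : G) (b : H), (a ∉ A ∨ b ∉ B) → ∀ (hab : ((a, b) : G × H) ∉ K),
      Γ.componentComplMk hab = Γ.componentComplMk hz₀ := by
    intro a b hor hab
    rcases hor with ha | hb
    · -- move H coordinate to h₀, then G coordinate to g₀
      have h1 : ((a, h₀) : G × H) ∉ K := hnotK (memB hh₀)
      have e1 : Γ.componentComplMk hab = Γ.componentComplMk h1 := by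
        have := Hmove a ha (b⁻¹ * h₀) b hab (by rw [mul_inv_cancel_left]; exact h1)
        exact this.trans (mkC_congr (by rw [mul_inv_cancel_left]) _ _)
      have e2 : Γ.componentComplMk h1 = Γ.componentComplMk hz₀ := by
        have := Gmove h₀ hh₀ (a⁻¹ * g₀) a h1 (by rw [mul_inv_cancel_left]; exact hz₀)
        exact this.trans (mkC_congr (by rw [mul_inv_cancel_left]) _ _)
      exact e1.trans e2
    · -- move G coordinate to g₀, then H coordinate to h₀
      have h1 : ((g₀, b) : G × H) ∉ K := hnotK (memA hg₀)
      have e1 : Γ.componentComplMk hab = Γ.componentComplMk h1 := by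
        have := Gmove b hb (a⁻¹ * g₀) a hab (by rw [mul_inv_cancel_left]; exact h1)
        exact this.trans (mkC_congr (by rw [mul_inv_cancel_left]) _ _)
      have e2 : Γ.componentComplMk h1 = Γ.componentComplMk hz₀ := by
        have := Hmove g₀ hg₀ (b⁻¹ * h₀) b h1 (by rw [mul_inv_cancel_left]; exact hz₀)
        exact this.trans (mkC_congr (by rw [mul_inv_cancel_left]) _ _)
      exact e1.trans e2
  intro x y hxL hyL hx hy
  have hxor : x.1 ∉ A ∨ x.2 ∉ B := by
    by_contra hc
    push_neg at hc
    exact hxL (Finset.mem_union_right _ (hLfin.mem_toFinset.mpr (Or.inr ⟨hc.1, hc.2⟩)))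
  have hyor : y.1 ∉ A ∨ y.2 ∉ B := by
    by_contra hc
    push_neg at hc
    exact hyL (Finset.mem_union_right _ (hLfin.mem_toFinset.mpr (Or.inr ⟨hc.1, hc.2⟩)))
  have hx' : ((x.1, x.2) : G × H) ∉ K := by simpa using hx
  have hy' : ((y.1, y.2) : G × H) ∉ K := by simpa using hy
  have := (connect x.1 x.2 hxor hx').trans (connect y.1 y.2 hyor hy').symm
  exact (mkC_congr rfl hx hx').trans (this.trans (mkC_congr rfl hy' hy))

end CayleyAux

/-- If `G` and `H` are infinite finitely generated groups, then the direct product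
`G × H` has exactly one end: for any finite generating set `S` of `G × H`, the Cayley
graph of `G × H` with respect to `S` has exactly one end. -/
theorem product_of_infinite_groups_one_ended (G H : Type*) [Group G] [Group H]
    [Infinite G] [Infinite H] (hG : Group.FG G) (hH : Group.FG H)
    (S : Finset (G × H)) (hS : Subgroup.closure (S : Set (G × H)) = ⊤) :
    Nat.card (cayleyGraph (G × H) (S : Set (G × H))).end = 1 := by
  classical
  set Γ := cayleyGraph (G × H) (S : Set (G × H)) with hΓ
  have hpc : Γ.Preconnected := CayleyAux.preconnected _ hS
  haveI : Fact Γ.Preconnected := ⟨hpc⟩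
  haveI : LocallyFinite Γ := fun v => (CayleyAux.neighborSet_finite S v).fintype
  haveI : ∀ j : (Finset (G × H))ᵒᵖ, Finite (Γ.componentComplFunctor.obj j) :=
    fun j => Γ.componentCompl_finite j.unop
  haveI : ∀ j : (Finset (G × H))ᵒᵖ, Nonempty (Γ.componentComplFunctor.obj j) :=
    fun j => Γ.componentCompl_nonempty_of_infinite j.unop
  have hne : Γ.end.Nonempty := nonempty_sections_of_finite_inverse_system Γ.componentComplFunctor
  obtain ⟨SG, hSG⟩ := hG.out
  obtain ⟨SH, hSH⟩ := hH.out
  have key : ∀ e₁ e₂ : Γ.end, e₁ = e₂ := by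
    intro e₁ e₂
    apply Subtype.ext
    funext K
    obtain ⟨L, hKL, hL⟩ :=
      CayleyAux.main_comp (S : Set (G × H)) hS SG hSG SH hSH K.unop
    have hval : ∀ e : Γ.end, ∀ x : G × H, x ∈ (e.val (Opposite.op L)).supp →
        ∀ (hx : x ∉ ((K.unop : Finset (G × H)) : Set (G × H))),
          e.val K = Γ.componentComplMk hx := by
      intro e x hxsupp hx
      obtain ⟨hxL, hxeq⟩ := hxsupp
      have hmap : Γ.componentComplFunctor.map (CategoryTheory.opHomOfLE hKL)
          (e.val (Opposite.op L)) = e.val K := e.prop _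
      rw [← hmap, ← hxeq]
      exact (SimpleGraph.ComponentCompl.hom_mk hxL hKL).symm
    obtain ⟨x, hx⟩ := (e₁.val (Opposite.op L)).nonempty
    obtain ⟨y, hy⟩ := (e₂.val (Opposite.op L)).nonempty
    have hxL : x ∉ L := hx.choose
    have hyL : y ∉ L := hy.choose
    have hxK : x ∉ ((K.unop : Finset (G × H)) : Set (G × H)) := fun h => hxL (hKL h)
    have hyK : y ∉ ((K.unop : Finset (G × H)) : Set (G × H)) := fun h => hyL (hKL h)
    rw [hval e₁ x hx hxK, hval e₂ y hy hyK]
    exact hL x y (by simpa using hxL) (by simpa using hyL) hxK hyK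
  haveI : Nonempty ↥Γ.end := hne.to_subtype
  haveI : Subsingleton ↥Γ.end := ⟨key⟩
  exact Nat.card_unique
end
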